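/- Quantitative reverse doubling for A_{p,q} weights: Let 1 < p ≤ q < ∞ and let w ∈ A_{p,q} be a weight with w > 0 on a set of positive measure. Then there is a constant c > 0, depending only on n and q, such that for every cube Q ⊂ ℝⁿ, (∫_Q w^q dx)/(∫_{2Q} w^q dx) ≤ 1 − c [w]_{A_{p,q}}^{-1}, where 2Q is the cube concentric with Q of twice the side length. -/

import Mathlib

/-!
On a cube `R`, Hölder's inequality for `1 = w · w⁻¹` followed by Jensen's inequality from
`L^{q'}` to `L^{p'}` (note `q' ≤ p'`) gives `(|E|/|R|)^q w^q(R) ≤ [w]_{A_{p,q}} w^q(E)` for every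
`E ⊆ R`. Take `R = 2Q` and for `E` a cube of side `h/2` inside `2Q` that touches `Q` only along a
face: then `w^q(E) ≥ 4^{-nq} [w]_{A_{p,q}}⁻¹ w^q(2Q)`, while `w^q(Q) + w^q(E) ≤ w^q(2Q)`.
-/

open MeasureTheory ENNReal Set

noncomputable section

/-- Euclidean space `ℝⁿ`. -/
abbrev Euc (n : ℕ) := EuclideanSpace ℝ (Fin n)

variable {n : ℕ}

/-- The axis-parallel closed cube with lower corner `a` and side length `h`. -/
def Cube (a : Euc n) (h : ℝ) : Set (Euc n) :=
  {x | ∀ i, a i ≤ x i ∧ x i ≤ a i + h}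

/-- The weighted measure `u(E) = ∫_E u dx` of a set. -/
def wMeas (u : Euc n → ℝ) (E : Set (Euc n)) : ℝ≥0∞ :=
  ∫⁻ x in E, ENNReal.ofReal (u x)

/-- The dual exponent `p' = p/(p-1)`. -/
def dualExp (p : ℝ) : ℝ := p / (p - 1)

/-- The `A_{p,q}` constant of a weight `w` (with the `A_{1,q}` convention when `p = 1`). -/
def Apq (p q : ℝ) (w : Euc n → ℝ) : ℝ≥0∞ :=
  ⨆ (a : Euc n) (h : ℝ) (_ : 0 < h),
    ((volume (Cube a h))⁻¹ * ∫⁻ x in Cube a h, ENNReal.ofReal (w x) ^ q) *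
      (if p = 1 then
        (essSup (fun x => (ENNReal.ofReal (w x))⁻¹) (volume.restrict (Cube a h))) ^ q
      else
        ((volume (Cube a h))⁻¹ * ∫⁻ x in Cube a h,
            ENNReal.ofReal (w x) ^ (-(dualExp p))) ^ (q / dualExp p))

/-- The weighted Lebesgue norm `‖w f‖_{L^p(ℝⁿ)}`. -/
def wLp (w f : Euc n → ℝ) (p : ℝ) : ℝ≥0∞ :=
  (∫⁻ x, (ENNReal.ofReal (w x) * ENNReal.ofReal |f x|) ^ p) ^ (1 / p)

/-- The weighted Lebesgue norm `‖w g‖_{L^q(ℝⁿ)}` of an `ℝ≥0∞`-valued function. -/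
def wLpE (w : Euc n → ℝ) (g : Euc n → ℝ≥0∞) (q : ℝ) : ℝ≥0∞ :=
  (∫⁻ x, (ENNReal.ofReal (w x) * g x) ^ q) ^ (1 / q)

/-- The weak norm `‖g‖_{L^{q,∞}(u)} = sup_{λ>0} λ u({|g|>λ})^{1/q}`. -/
def weakLp (u : Euc n → ℝ) (g : Euc n → ℝ) (q : ℝ) : ℝ≥0∞ :=
  ⨆ (t : ℝ) (_ : 0 < t), ENNReal.ofReal t * wMeas u {x | t < |g x|} ^ (1 / q)

/-- The weak norm of an `ℝ≥0∞`-valued function. -/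
def weakLpE (u : Euc n → ℝ) (g : Euc n → ℝ≥0∞) (q : ℝ) : ℝ≥0∞ :=
  ⨆ (t : ℝ) (_ : 0 < t), ENNReal.ofReal t * wMeas u {x | ENNReal.ofReal t < g x} ^ (1 / q)

/-- The fractional integral (Riesz potential) `I_α f(x) = ∫ |f(y)| |x-y|^{α-n} dy`. -/
def riesz (α : ℝ) (f : Euc n → ℝ) (x : Euc n) : ℝ≥0∞ :=
  ∫⁻ y, ENNReal.ofReal |f y| * ENNReal.ofReal (‖x - y‖ ^ (α - (n : ℝ)))

/-- The fractional maximal operator `M_α f(x) = sup_{Q ∋ x} |Q|^{α/n-1} ∫_Q |f|`. -/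
def fracMax (α : ℝ) (f : Euc n → ℝ) (x : Euc n) : ℝ≥0∞ :=
  ⨆ (a : Euc n) (h : ℝ) (_ : 0 < h) (_ : x ∈ Cube a h),
    volume (Cube a h) ^ (α / (n : ℝ) - 1) * ∫⁻ y in Cube a h, ENNReal.ofReal |f y|

open ProbabilityTheory

lemma cube_eq_preimage (a : Euc n) (h : ℝ) :
    Cube a h =
      (MeasurableEquiv.toLp 2 (Fin n → ℝ)).symm ⁻¹' univ.pi fun i => Icc (a i) (a i + h) := by
  ext x
  simp [Cube, Set.mem_pi, Icc]

lemma measurableSet_cube (a : Euc n) (h : ℝ) : MeasurableSet (Cube a h) := by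
  rw [cube_eq_preimage]
  exact (MeasurableEquiv.toLp 2 (Fin n → ℝ)).symm.measurable
    (MeasurableSet.univ_pi fun _ => measurableSet_Icc)

lemma volume_cube (a : Euc n) (h : ℝ) :
    volume (Cube a h) = ENNReal.ofReal h ^ n := by
  rw [cube_eq_preimage, (EuclideanSpace.volume_preserving_symm_measurableEquiv_toLp
    (Fin n)).measure_preimage_equiv, volume_pi_pi]
  simp [Real.volume_Icc]

lemma cube_subset_cube {a b : Euc n} {h k : ℝ} (h_lo : ∀ i, b i ≤ a i)
    (h_hi : ∀ i, a i + h ≤ b i + k) : Cube a h ⊆ Cube b k :=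
  fun _ hx i => ⟨(h_lo i).trans (hx i).1, (hx i).2.trans (h_hi i)⟩

lemma volume_cube_inter_cube_add_single (a : Euc n) (i : Fin n) (h k : ℝ) :
    volume (Cube a h ∩ Cube (a + EuclideanSpace.single i h) k) = 0 := by
  refine measure_mono_null (t := (MeasurableEquiv.toLp 2 (Fin n → ℝ)).symm ⁻¹'
    univ.pi (Function.update (fun j => Icc (a j) (a j + h)) i {a i + h})) ?_ ?_
  · rintro _ ⟨hx, hx'⟩ j -
    rcases eq_or_ne j i with rfl | hji
    · have := (hx' j).1
      simp only [PiLp.add_apply, PiLp.single_apply, if_true] at this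
      simpa using le_antisymm (hx j).2 this
    · simpa [hji] using hx j
  · rw [(EuclideanSpace.volume_preserving_symm_measurableEquiv_toLp
      (Fin n)).measure_preimage_equiv, volume_pi_pi]
    exact Finset.prod_eq_zero (Finset.mem_univ i) (by simp)

lemma ENNReal.div_le_one_sub_of_add_mul_le {a b c : ℝ≥0∞} (h : a + c * b ≤ b) :
    a / b ≤ 1 - c := by
  rcases eq_or_ne b ⊤ with rfl | hb_top
  · simp
  rcases eq_or_ne b 0 with rfl | hb0
  · simp_all
  have hcb : c * b ≠ ⊤ := ne_top_of_le_ne_top hb_top (le_add_self.trans h)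
  refine ENNReal.div_le_of_le_mul ?_
  rw [ENNReal.sub_mul fun _ _ => hb_top, one_mul]
  exact ENNReal.le_sub_of_add_le_right hcb h

lemma setLIntegral_add_setLIntegral_le {α : Type*} [MeasurableSpace α] {μ : Measure α}
    {s t u : Set α} (ht : MeasurableSet t) (hst : μ (s ∩ t) = 0) (hsu : s ⊆ u) (htu : t ⊆ u)
    (f : α → ℝ≥0∞) : ∫⁻ x in s, f x ∂μ + ∫⁻ x in t, f x ∂μ ≤ ∫⁻ x in u, f x ∂μ := by
  rw [← lintegral_add_measure, ← Measure.restrict_union_add_inter s ht, lintegral_add_measure,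
    setLIntegral_measure_zero _ _ hst, add_zero]
  exact lintegral_mono_set (union_subset hsu htu)

lemma dualExp_le_dualExp {p q : ℝ} (hp : 1 < p) (hpq : p ≤ q) : dualExp q ≤ dualExp p := by
  rw [dualExp, dualExp, div_le_div_iff₀ (by linarith) (by linarith)]
  nlinarith

section Weights

variable {α : Type*} [MeasurableSpace α]

/-- For `μ` the normalized Lebesgue measure on a cube and `s = p'`, this is the quantity whose
supremum over cubes is `[w]_{A_{p,q}}`. -/
def apqProduct (μ : Measure α) (q s : ℝ) (w : α → ℝ) : ℝ≥0∞ :=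
  (∫⁻ x, ENNReal.ofReal (w x) ^ q ∂μ) * (∫⁻ x, ENNReal.ofReal (w x) ^ (-s) ∂μ) ^ (q / s)

variable {μ : Measure α} {w : α → ℝ}

lemma ae_pos_of_lintegral_rpow_neg_ne_top (hw : Measurable w) {s : ℝ} (hs : 0 < s)
    (h : ∫⁻ x, ENNReal.ofReal (w x) ^ (-s) ∂μ ≠ ⊤) : ∀ᵐ x ∂μ, 0 < w x := by
  filter_upwards [ae_lt_top (by fun_prop) h] with x hx
  by_contra hwx
  rw [ENNReal.ofReal_eq_zero.mpr (not_lt.mp hwx),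
    ENNReal.zero_rpow_of_neg (neg_neg_of_pos hs)] at hx
  exact lt_irrefl _ hx

/-- Hölder's inequality applied to `1 = w · w⁻¹`. -/
lemma measure_univ_le_lintegral_rpow_mul_lintegral_rpow_neg (hw : Measurable w)
    (hpos : ∀ᵐ x ∂μ, 0 < w x) {q t : ℝ} (hqt : q.HolderConjugate t) :
    μ univ ≤ (∫⁻ x, ENNReal.ofReal (w x) ^ q ∂μ) ^ (1 / q) *
      (∫⁻ x, ENNReal.ofReal (w x) ^ (-t) ∂μ) ^ (1 / t) := by
  have hf : Measurable fun x => ENNReal.ofReal (w x) := by fun_prop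
  calc μ univ = ∫⁻ x, ENNReal.ofReal (w x) * (ENNReal.ofReal (w x))⁻¹ ∂μ := by
        rw [← lintegral_one]
        refine lintegral_congr_ae ?_
        filter_upwards [hpos] with x hx
        exact (ENNReal.mul_inv_cancel (ENNReal.ofReal_pos.mpr hx).ne' ENNReal.ofReal_ne_top).symm
    _ ≤ _ := ENNReal.lintegral_mul_le_Lp_mul_Lq μ hqt hf.aemeasurable hf.inv.aemeasurable
    _ = _ := by simp only [ENNReal.inv_rpow, ← ENNReal.rpow_neg]

lemma measure_rpow_mul_lintegral_le_apqProduct_mul [IsProbabilityMeasure μ]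
    (hw : Measurable w) {q s : ℝ} (hq : 1 < q) (hs : dualExp q ≤ s)
    (hfin : apqProduct μ q s w ≠ ⊤) (E : Set α) :
    μ E ^ q * ∫⁻ x, ENNReal.ofReal (w x) ^ q ∂μ ≤
      apqProduct μ q s w * ∫⁻ x in E, ENNReal.ofReal (w x) ^ q ∂μ := by
  rw [apqProduct] at hfin
  set S := ∫⁻ x, ENNReal.ofReal (w x) ^ q ∂μ
  set I := ∫⁻ x, ENNReal.ofReal (w x) ^ (-s) ∂μ
  have hqt : q.HolderConjugate (dualExp q) := Real.HolderConjugate.conjExponent hq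
  have ht : 0 < dualExp q := hqt.symm.pos
  have hs0 : 0 < s := ht.trans_le hs
  have hqs : 0 < q / s := div_pos hqt.pos hs0
  rcases eq_or_ne S 0 with hS | hS
  · simp [hS]
  have hI : I ≠ ⊤ := by
    intro hI
    rw [hI, ENNReal.top_rpow_of_pos hqs, ENNReal.mul_top hS] at hfin
    exact hfin rfl
  have hpos := ae_pos_of_lintegral_rpow_neg_ne_top hw hs0 hI
  -- Jensen: `μ` is a probability measure and `q' ≤ s`.
  have hjensen :
      (∫⁻ x, ENNReal.ofReal (w x) ^ (-dualExp q) ∂μ) ^ (1 / dualExp q) ≤ I ^ (1 / s) := by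
    have := eLpNorm'_le_eLpNorm'_of_exponent_le ht hs μ (f := fun x => (ENNReal.ofReal (w x))⁻¹)
      (ENNReal.measurable_ofReal.comp hw).inv.aestronglyMeasurable
    simpa only [eLpNorm'_eq_lintegral_enorm, enorm_eq_self, ENNReal.inv_rpow,
      ← ENNReal.rpow_neg] using this
  have hE : μ E ≤ (∫⁻ x in E, ENNReal.ofReal (w x) ^ q ∂μ) ^ (1 / q) * I ^ (1 / s) := by
    have := measure_univ_le_lintegral_rpow_mul_lintegral_rpow_neg hw
      (ae_restrict_of_ae (s := E) hpos) hqt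
    rw [Measure.restrict_apply_univ] at this
    refine this.trans (mul_le_mul' le_rfl (le_trans ?_ hjensen))
    exact ENNReal.rpow_le_rpow (setLIntegral_le_lintegral _ _) (by positivity)
  calc μ E ^ q * S
      ≤ ((∫⁻ x in E, ENNReal.ofReal (w x) ^ q ∂μ) ^ (1 / q) * I ^ (1 / s)) ^ q * S := by
        gcongr
    _ = apqProduct μ q s w * ∫⁻ x in E, ENNReal.ofReal (w x) ^ q ∂μ := by
        rw [apqProduct, ENNReal.mul_rpow_of_nonneg _ _ hqt.nonneg, ← ENNReal.rpow_mul,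
          ← ENNReal.rpow_mul, one_div_mul_cancel hqt.ne_zero, ENNReal.rpow_one,
          one_div_mul_eq_div]
        ring

end Weights

lemma apqProduct_cond_cube_le_Apq {p q : ℝ} (hp : p ≠ 1) (w : Euc n → ℝ) (a : Euc n) {h : ℝ}
    (hh : 0 < h) : apqProduct (volume[|Cube a h]) q (dualExp p) w ≤ Apq p q w := by
  rw [apqProduct, ProbabilityTheory.cond, lintegral_smul_measure, lintegral_smul_measure]
  refine le_iSup₂_of_le a h (le_iSup_of_le hh ?_)
  rw [if_neg hp, smul_eq_mul, smul_eq_mul]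

lemma volume_cube_div_volume_cube (b a : Euc n) {k h : ℝ} (hk : 0 ≤ k) (hh : 0 < h) :
    volume (Cube b k) / volume (Cube a h) = ENNReal.ofReal ((k / h) ^ n) := by
  rw [volume_cube, volume_cube, ← ENNReal.ofReal_pow hk, ← ENNReal.ofReal_pow hh.le,
    ← ENNReal.ofReal_div_of_pos (by positivity), div_pow]

lemma volume_div_rpow_mul_le_Apq_mul {p q : ℝ} (hp : 1 < p) (hpq : p ≤ q) {w : Euc n → ℝ}
    (hw : Measurable w) (hA : Apq p q w ≠ ⊤) (a : Euc n) {h : ℝ} (hh : 0 < h) {E : Set (Euc n)}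
    (hE : MeasurableSet E) (hEQ : E ⊆ Cube a h) :
    (volume E / volume (Cube a h)) ^ q * ∫⁻ x in Cube a h, ENNReal.ofReal (w x) ^ q ≤
      Apq p q w * ∫⁻ x in E, ENNReal.ofReal (w x) ^ q := by
  have hQ0 : volume (Cube a h) ≠ 0 := by
    rw [volume_cube]; exact pow_ne_zero _ (ENNReal.ofReal_pos.mpr hh).ne'
  have hQtop : volume (Cube a h) ≠ ⊤ := by
    rw [volume_cube]; exact ENNReal.pow_ne_top ENNReal.ofReal_ne_top
  have := cond_isProbabilityMeasure_of_finite hQ0 hQtop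
  have hP := apqProduct_cond_cube_le_Apq (q := q) hp.ne' w a hh
  have hkey := measure_rpow_mul_lintegral_le_apqProduct_mul (μ := volume[|Cube a h]) hw
    (hp.trans_le hpq) (dualExp_le_dualExp hp hpq) (ne_top_of_le_ne_top hA hP) E
  -- cancel the normalizing factor `(volume (Cube a h))⁻¹` of `volume[|Cube a h]`
  rw [cond_apply (measurableSet_cube a h), inter_eq_right.mpr hEQ, ProbabilityTheory.cond,
    lintegral_smul_measure, Measure.restrict_smul, lintegral_smul_measure,
    Measure.restrict_restrict hE, inter_eq_left.mpr hEQ, smul_eq_mul, smul_eq_mul,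
    ← ProbabilityTheory.cond, mul_left_comm, mul_left_comm (apqProduct _ _ _ _),
    ENNReal.mul_le_mul_iff_right (ENNReal.inv_ne_zero.mpr hQtop) (ENNReal.inv_ne_top.mpr hQ0),
    ← ENNReal.div_eq_inv_mul] at hkey
  exact hkey.trans (mul_le_mul_left hP _)

theorem Apq_reverse_doubling_general
    (n : ℕ) (hn : 0 < n) (q : ℝ) :
    ∃ c : ℝ, 0 < c ∧ ∀ p : ℝ, 1 < p → p ≤ q → ∀ w : Euc n → ℝ,
      Measurable w → (∀ x, 0 ≤ w x) →
      Apq p q w < ⊤ → 0 < volume {x : Euc n | 0 < w x} →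
      ∀ (a : Euc n) (h : ℝ), 0 < h →
        (∫⁻ x in Cube a h, ENNReal.ofReal (w x) ^ q) /
            (∫⁻ x in Cube (WithLp.toLp 2 (fun i => a i - h / 2) : Euc n) (2 * h), ENNReal.ofReal (w x) ^ q) ≤
          1 - ENNReal.ofReal c * (Apq p q w)⁻¹ := by
  refine ⟨((1 / 4 : ℝ) ^ n) ^ q, by positivity, ?_⟩
  rintro p hp hpq w hw - hA - a h hh
  set R := Cube (WithLp.toLp 2 (fun i => a i - h / 2) : Euc n) (2 * h)
  set Q' := Cube (a + EuclideanSpace.single ⟨0, hn⟩ h) (h / 2)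
  have hQR : Cube a h ⊆ R :=
    cube_subset_cube (fun i => by simp; linarith) (fun i => by simp; linarith)
  have hQ'R : Q' ⊆ R :=
    cube_subset_cube (fun i => by simp; split_ifs <;> linarith)
      (fun i => by simp; split_ifs <;> linarith)
  have hratio : volume Q' / volume R = ENNReal.ofReal ((1 / 4 : ℝ) ^ n) := by
    rw [volume_cube_div_volume_cube _ _ (by positivity) (by positivity)]
    congr 2
    field_simp
    norm_num
  have hQ' : ENNReal.ofReal (((1 / 4 : ℝ) ^ n) ^ q) * (Apq p q w)⁻¹ *
      ∫⁻ x in R, ENNReal.ofReal (w x) ^ q ≤ ∫⁻ x in Q', ENNReal.ofReal (w x) ^ q := by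
    rw [mul_right_comm, ← div_eq_mul_inv, ← ENNReal.ofReal_rpow_of_nonneg (by positivity)
      (by linarith), ← hratio]
    refine ENNReal.div_le_of_le_mul ?_
    rw [mul_comm (∫⁻ x in Q', _)]
    exact volume_div_rpow_mul_le_Apq_mul hp hpq hw hA.ne _ (by positivity)
      (measurableSet_cube _ _) hQ'R
  refine ENNReal.div_le_one_sub_of_add_mul_le ?_
  calc _ ≤ (∫⁻ x in Cube a h, ENNReal.ofReal (w x) ^ q) + ∫⁻ x in Q', ENNReal.ofReal (w x) ^ q :=
        add_le_add le_rfl hQ'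
    _ ≤ _ := setLIntegral_add_setLIntegral_le (measurableSet_cube _ _)
        (volume_cube_inter_cube_add_single a _ h _) hQR hQ'R fun x => ENNReal.ofReal (w x) ^ q

/-- Quantitative reverse doubling for `A_{p,q}` weights (Lemma 5.1): for every
cube `Q`, `w^q(Q)/w^q(2Q) ≤ 1 - c [w]_{A_{p,q}}⁻¹`, where `2Q` is the concentric
double of `Q`.  The constant `c` depends only on `n` and `q`. -/
theorem Apq_reverse_doubling
    (n : ℕ) (hn : 0 < n) (q : ℝ) (hq : 1 < q) :
    ∃ c : ℝ, 0 < c ∧ ∀ p : ℝ, 1 < p → p ≤ q → ∀ w : Euc n → ℝ,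
      Measurable w → (∀ x, 0 ≤ w x) →
      Apq p q w < ⊤ → 0 < volume {x : Euc n | 0 < w x} →
      ∀ (a : Euc n) (h : ℝ), 0 < h →
        (∫⁻ x in Cube a h, ENNReal.ofReal (w x) ^ q) /
            (∫⁻ x in Cube (WithLp.toLp 2 (fun i => a i - h / 2) : Euc n) (2 * h), ENNReal.ofReal (w x) ^ q) ≤
          1 - ENNReal.ofReal c * (Apq p q w)⁻¹ :=
  Apq_reverse_doubling_general n hn q

end
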